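/- Define the equalized-odds unfairness ε_D^{EO}(f) = ∑_{y∈{0,1}} |R_D^{y,0}(f) − R_D^{y,1}(f)| where R_D^{y,a}(f) = E_D[f(X)_1|Y=y,A=a]. Then for any two domains D_i, D_j: ε_{D_j}^{EO}(f) ≤ ε_{D_i}^{EO}(f) + √2 ∑_{y,a∈{0,1}} d_JS(P_{D_j}^{X|Y=y,A=a}, P_{D_i}^{X|Y=y,A=a}). -/

import Mathlib

open MeasureTheory ProbabilityTheory Real
open scoped ENNReal

/-- Kullback–Leibler divergence (natural log), as a real number. -/
noncomputable def klDiv {α : Type*} [MeasurableSpace α] (P Q : Measure α) : ℝ :=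
  ∫ x, Real.log ((P.rnDeriv Q) x).toReal ∂P

/-- The midpoint (mixture) measure (P + Q)/2. -/
noncomputable def midM {α : Type*} [MeasurableSpace α] (P Q : Measure α) : Measure α :=
  (2⁻¹ : ℝ≥0∞) • (P + Q)

/-- Jensen–Shannon divergence. -/
noncomputable def jsDiv {α : Type*} [MeasurableSpace α] (P Q : Measure α) : ℝ :=
  2⁻¹ * klDiv P (midM P Q) + 2⁻¹ * klDiv Q (midM P Q)

/-- Jensen–Shannon distance. -/
noncomputable def jsDist {α : Type*} [MeasurableSpace α] (P Q : Measure α) : ℝ :=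
  Real.sqrt (jsDiv P Q)

open Set

/-! With `M = (P + Q) / 2` and `g = dP/dM`, one has `0 ≤ g ≤ 2` and `dQ/dM = 2 - g`, so
`∫ f dP - ∫ f dQ = ∫ (g - 1) (2 f - 1) dM`, whose square is at most `∫ (g - 1)² dM` by Jensen,
as `|2 f - 1| ≤ 1`. The pointwise bound `(h - 1)² ≤ h log h + (2 - h) log (2 - h)` on `[0, 2]`
turns this into `KL(P ‖ M) + KL(Q ‖ M) = 2 JS(P, Q)`. The theorem follows by applying this to
each of the four class-and-group conditionals and using the triangle inequality for each class. -/

lemma abs_sub_le_abs_sub_add_abs_sub_add_abs_sub {G : Type*} [AddCommGroup G] [LinearOrder G]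
    [IsOrderedAddMonoid G] (a b c d : G) : |a - b| ≤ |c - d| + |a - c| + |b - d| := by
  calc |a - b| ≤ |a - c| + (|c - d| + |d - b|) :=
        (abs_sub_le a c b).trans (add_le_add_right (abs_sub_le c d b) _)
    _ = |c - d| + |a - c| + |b - d| := by rw [abs_sub_comm d b]; abel

lemma two_mul_le_log_one_add_sub_log_one_sub {t : ℝ} (ht₀ : 0 ≤ t) (ht₁ : t < 1) :
    2 * t ≤ log (1 + t) - log (1 - t) := by
  have hsum := hasSum_log_sub_log_of_abs_lt_one (abs_lt.2 ⟨by linarith, ht₁⟩)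
  simpa using le_hasSum hsum 0 fun k _ => by positivity

lemma sq_le_mul_log_one_add_add_mul_log_one_sub {t : ℝ} (ht₀ : 0 ≤ t) (ht₁ : t ≤ 1) :
    t ^ 2 ≤ (1 + t) * log (1 + t) + (1 - t) * log (1 - t) := by
  set G : ℝ → ℝ := fun s => (1 + s) * log (1 + s) + (1 - s) * log (1 - s) - s ^ 2
  have hG : ContinuousOn G (Icc 0 1) := by fun_prop
  have hG' : ∀ s ∈ Ioo (0 : ℝ) 1,
      HasDerivAt G (log (1 + s) - log (1 - s) - 2 * s) s := by
    rintro s ⟨hs₀, hs₁⟩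
    have hplus := (hasDerivAt_mul_log (x := 1 + s) (by linarith)).comp s
      ((hasDerivAt_id s).const_add 1)
    have hminus := (hasDerivAt_mul_log (x := 1 - s) (by linarith)).comp s
      ((hasDerivAt_id s).const_sub 1)
    exact ((hplus.add hminus).sub (hasDerivAt_pow 2 s)).congr_deriv (by ring)
  have hmono : MonotoneOn G (Icc 0 1) := by
    refine monotoneOn_of_deriv_nonneg (convex_Icc 0 1) hG ?_ ?_
    · rw [interior_Icc]
      exact fun s hs => (hG' s hs).differentiableAt.differentiableWithinAt
    · rw [interior_Icc]
      intro s hs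
      rw [(hG' s hs).deriv]
      linarith [two_mul_le_log_one_add_sub_log_one_sub hs.1.le hs.2]
  simpa [G] using hmono ⟨le_rfl, zero_le_one⟩ ⟨ht₀, ht₁⟩ ht₀

lemma sq_sub_one_le_mul_log_add_mul_log {h : ℝ} (h₀ : 0 ≤ h) (h₂ : h ≤ 2) :
    (h - 1) ^ 2 ≤ h * log h + (2 - h) * log (2 - h) := by
  rcases le_total 1 h with h₁ | h₁
  · have := sq_le_mul_log_one_add_add_mul_log_one_sub (t := h - 1) (by linarith) (by linarith)
    ring_nf at this ⊢; linarith
  · have := sq_le_mul_log_one_add_add_mul_log_one_sub (t := 1 - h) (by linarith) (by linarith)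
    ring_nf at this ⊢; linarith

lemma Continuous.integrable_comp_of_ae_mem {Ω α : Type*} [MeasurableSpace Ω] {μ : Measure Ω}
    [IsFiniteMeasure μ] [TopologicalSpace α] [MeasurableSpace α] [OpensMeasurableSpace α]
    {φ : α → ℝ} (hφ : Continuous φ) {K : Set α} (hK : IsCompact K) {F : Ω → α}
    (hF : AEMeasurable F μ) (hFK : ∀ᵐ x ∂μ, F x ∈ K) :
    Integrable (fun x => φ (F x)) μ := by
  obtain ⟨C, hC⟩ := hK.exists_bound_of_continuousOn hφ.continuousOn
  exact .of_bound (hφ.measurable.comp_aemeasurable hF).aestronglyMeasurable C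
    (hFK.mono fun x hx => hC _ hx)

lemma sq_integral_mul_sub_integral_mul_le {Ω : Type*} [MeasurableSpace Ω] {μ : Measure Ω}
    [IsProbabilityMeasure μ] {g f : Ω → ℝ} (hg : Measurable g) (hf : Measurable f)
    (hg_mem : ∀ᵐ x ∂μ, g x ∈ Icc 0 2) (hf_mem : ∀ᵐ x ∂μ, f x ∈ Icc 0 1)
    (hg_one : ∫ x, g x ∂μ = 1) :
    (∫ x, g x * f x ∂μ - ∫ x, (2 - g x) * f x ∂μ) ^ 2
      ≤ ∫ x, g x * log (g x) ∂μ + ∫ x, (2 - g x) * log (2 - g x) ∂μ := by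
  have hgf_mem : ∀ᵐ x ∂μ, (g x, f x) ∈ Icc (0 : ℝ) 2 ×ˢ Icc (0 : ℝ) 1 := by
    filter_upwards [hg_mem, hf_mem] with x hgx hfx using ⟨hgx, hfx⟩
  have hintegrable : ∀ φ : ℝ × ℝ → ℝ, Continuous φ → Integrable (fun x => φ (g x, f x)) μ :=
    fun φ hφ => hφ.integrable_comp_of_ae_mem (isCompact_Icc.prod isCompact_Icc)
      (hg.prodMk hf).aemeasurable hgf_mem
  set u : Ω → ℝ := fun x => (g x - 1) * (2 * f x - 1)
  have hu : Integrable u μ := hintegrable (fun p => (p.1 - 1) * (2 * p.2 - 1)) (by fun_prop)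
  have hu_sq : Integrable (fun x => u x ^ 2) μ :=
    hintegrable (fun p => ((p.1 - 1) * (2 * p.2 - 1)) ^ 2) (by fun_prop)
  have hg_sub_one : Integrable (fun x => g x - 1) μ := hintegrable (fun p => p.1 - 1) (by fun_prop)
  -- `g f - (2 - g) f = u + (g - 1)`, and `g - 1` has mean zero
  have hdiff : ∫ x, g x * f x ∂μ - ∫ x, (2 - g x) * f x ∂μ = ∫ x, u x ∂μ := by
    have hmean : ∫ x, (g x - 1) ∂μ = 0 := by
      rw [integral_sub (hintegrable (fun p => p.1) (by fun_prop)) (integrable_const 1), hg_one]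
      simp
    rw [← integral_sub (hintegrable (fun p => p.1 * p.2) (by fun_prop))
      (hintegrable (fun p => (2 - p.1) * p.2) (by fun_prop)), ← add_zero (∫ x, u x ∂μ), ← hmean,
      ← integral_add hu hg_sub_one]
    congr 1 with x
    ring
  have hlog : Continuous fun p : ℝ × ℝ => p.1 * log p.1 := by fun_prop
  have hlog' : Continuous fun p : ℝ × ℝ => (2 - p.1) * log (2 - p.1) := by fun_prop
  rw [hdiff]
  calc (∫ x, u x ∂μ) ^ 2 ≤ ∫ x, u x ^ 2 ∂μ :=
        (even_two.convexOn_pow).map_integral_le (continuous_pow 2).continuousOn isClosed_univ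
          (ae_of_all _ fun _ => trivial) hu hu_sq
    _ ≤ ∫ x, (g x - 1) ^ 2 ∂μ := by
        refine integral_mono_ae hu_sq (hintegrable (fun p => (p.1 - 1) ^ 2) (by fun_prop)) ?_
        filter_upwards [hf_mem] with x ⟨hf₀, hf₁⟩
        have : (2 * f x - 1) ^ 2 ≤ 1 := by nlinarith
        calc u x ^ 2 = (g x - 1) ^ 2 * (2 * f x - 1) ^ 2 := by ring
          _ ≤ (g x - 1) ^ 2 := mul_le_of_le_one_right (sq_nonneg _) this
    _ ≤ ∫ x, (g x * log (g x) + (2 - g x) * log (2 - g x)) ∂μ := by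
        refine integral_mono_ae (hintegrable (fun p => (p.1 - 1) ^ 2) (by fun_prop))
          ((hintegrable _ hlog).add (hintegrable _ hlog')) ?_
        filter_upwards [hg_mem] with x ⟨hg₀, hg₂⟩
        exact sq_sub_one_le_mul_log_add_mul_log hg₀ hg₂
    _ = _ := integral_add (hintegrable _ hlog) (hintegrable _ hlog')

section midM

variable {α : Type*} [MeasurableSpace α] (P Q : Measure α)

lemma absolutelyContinuous_midM_left : P ≪ midM P Q :=
  (Measure.AbsolutelyContinuous.rfl.add_right Q).smul_right (by norm_num)

lemma absolutelyContinuous_midM_right : Q ≪ midM P Q :=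
  (Measure.AbsolutelyContinuous.rfl.add_right' P).smul_right (by norm_num)

lemma two_smul_midM : (2 : ℝ≥0∞) • midM P Q = P + Q := by
  rw [midM, smul_smul, ENNReal.mul_inv_cancel two_ne_zero ENNReal.ofNat_ne_top, one_smul]

instance isFiniteMeasure_midM [IsFiniteMeasure P] [IsFiniteMeasure Q] :
    IsFiniteMeasure (midM P Q) :=
  ⟨by simp [midM, ENNReal.mul_lt_top, measure_lt_top]⟩

instance isProbabilityMeasure_midM [IsProbabilityMeasure P] [IsProbabilityMeasure Q] :
    IsProbabilityMeasure (midM P Q) := by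
  constructor
  rw [midM, Measure.smul_apply, Measure.add_apply, measure_univ, measure_univ, smul_eq_mul,
    one_add_one_eq_two, ENNReal.inv_mul_cancel two_ne_zero ENNReal.ofNat_ne_top]

lemma toReal_rnDeriv_midM_add [IsFiniteMeasure P] [IsFiniteMeasure Q] :
    ∀ᵐ x ∂midM P Q,
      (P.rnDeriv (midM P Q) x).toReal + (Q.rnDeriv (midM P Q) x).toReal = 2 := by
  have h2 := Measure.rnDeriv_smul_left_of_ne_top (midM P Q) (midM P Q) (r := 2)
    ENNReal.ofNat_ne_top
  rw [two_smul_midM] at h2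
  filter_upwards [Measure.rnDeriv_add P Q (midM P Q), h2, (midM P Q).rnDeriv_self,
    Measure.rnDeriv_lt_top P (midM P Q), Measure.rnDeriv_lt_top Q (midM P Q)]
    with x hadd htwo hone hP hQ
  rw [← ENNReal.toReal_add hP.ne hQ.ne, ← Pi.add_apply, ← hadd, htwo, Pi.smul_apply, hone]
  norm_num

end midM

lemma klDiv_eq_integral_toReal_rnDeriv_mul_log {α : Type*} [MeasurableSpace α] {P M : Measure α}
    [SigmaFinite P] [P.HaveLebesgueDecomposition M] (hPM : P ≪ M) :
    klDiv P M = ∫ x, (P.rnDeriv M x).toReal * log (P.rnDeriv M x).toReal ∂M :=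
  (integral_toReal_rnDeriv_mul hPM).symm

lemma two_mul_jsDiv {α : Type*} [MeasurableSpace α] (P Q : Measure α) :
    2 * jsDiv P Q = klDiv P (midM P Q) + klDiv Q (midM P Q) := by
  rw [jsDiv]
  ring

lemma abs_integral_sub_integral_le_sqrt_two_mul_jsDist {α : Type*} [MeasurableSpace α]
    (P Q : Measure α) [IsProbabilityMeasure P] [IsProbabilityMeasure Q] {f : α → ℝ}
    (hf : Measurable f) (hf_mem : ∀ x, f x ∈ Icc 0 1) :
    |∫ x, f x ∂P - ∫ x, f x ∂Q| ≤ √2 * jsDist P Q := by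
  set M := midM P Q
  set g : α → ℝ := fun x => (P.rnDeriv M x).toReal
  have hPM : P ≪ M := absolutelyContinuous_midM_left P Q
  have hQM : Q ≪ M := absolutelyContinuous_midM_right P Q
  have hQ_eq : ∀ᵐ x ∂M, (Q.rnDeriv M x).toReal = 2 - g x :=
    (toReal_rnDeriv_midM_add P Q).mono fun x hx => by linarith
  have hg_mem : ∀ᵐ x ∂M, g x ∈ Icc 0 2 :=
    (toReal_rnDeriv_midM_add P Q).mono fun x hx =>
      ⟨ENNReal.toReal_nonneg, by linarith [(Q.rnDeriv M x).toReal_nonneg]⟩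
  have hg_one : ∫ x, g x ∂M = 1 := by
    simp [g, Measure.integral_toReal_rnDeriv hPM]
  have hIQ : ∫ x, f x ∂Q = ∫ x, (2 - g x) * f x ∂M := by
    rw [← integral_toReal_rnDeriv_mul hQM]
    exact integral_congr_ae (hQ_eq.mono fun x hx => by simp only [hx])
  have hklQ : klDiv Q M = ∫ x, (2 - g x) * log (2 - g x) ∂M := by
    rw [klDiv_eq_integral_toReal_rnDeriv_mul_log hQM]
    exact integral_congr_ae (hQ_eq.mono fun x hx => by simp only [hx])
  have hsq := sq_integral_mul_sub_integral_mul_le (Measure.measurable_rnDeriv P M).ennreal_toReal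
    hf hg_mem (ae_of_all _ hf_mem) hg_one
  rw [integral_toReal_rnDeriv_mul hPM, ← hIQ, ← hklQ,
    ← klDiv_eq_integral_toReal_rnDeriv_mul_log hPM, ← two_mul_jsDiv] at hsq
  calc |∫ x, f x ∂P - ∫ x, f x ∂Q| = √((∫ x, f x ∂P - ∫ x, f x ∂Q) ^ 2) :=
        (sqrt_sq_eq_abs _).symm
    _ ≤ √(2 * jsDiv P Q) := sqrt_le_sqrt hsq
    _ = √2 * jsDist P Q := sqrt_mul zero_le_two _

/-- equalized-odds unfairness transfer between two domains:
ε_{D_j}^{EO}(f) ≤ ε_{D_i}^{EO}(f) + √2·∑_{y,a} d_JS(P_{D_j}^{X|y,a}, P_{D_i}^{X|y,a}),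
where A=0,1 are encoded as false,true. -/
theorem stmt12 {𝒳 : Type*} [MeasurableSpace 𝒳]
    (νi νj : Bool → Bool → Measure 𝒳)
    (hνi : ∀ y a, IsProbabilityMeasure (νi y a))
    (hνj : ∀ y a, IsProbabilityMeasure (νj y a))
    (f1 : 𝒳 → ℝ) (hf : Measurable f1) (hf0 : ∀ x, 0 ≤ f1 x) (hf1 : ∀ x, f1 x ≤ 1) :
    ∑ y : Bool, |∫ x, f1 x ∂(νj y false) - ∫ x, f1 x ∂(νj y true)|
      ≤ ∑ y : Bool, |∫ x, f1 x ∂(νi y false) - ∫ x, f1 x ∂(νi y true)|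
        + Real.sqrt 2 * ∑ y : Bool, ∑ a : Bool, jsDist (νj y a) (νi y a) := by
  have hdist : ∀ y a, |∫ x, f1 x ∂(νj y a) - ∫ x, f1 x ∂(νi y a)|
      ≤ √2 * jsDist (νj y a) (νi y a) := fun y a =>
    haveI := hνi y a
    haveI := hνj y a
    abs_integral_sub_integral_le_sqrt_two_mul_jsDist _ _ hf fun x => ⟨hf0 x, hf1 x⟩
  have hgap : ∀ y, |∫ x, f1 x ∂(νj y false) - ∫ x, f1 x ∂(νj y true)|
      ≤ |∫ x, f1 x ∂(νi y false) - ∫ x, f1 x ∂(νi y true)|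
        + √2 * ∑ a : Bool, jsDist (νj y a) (νi y a) := by
    intro y
    refine (abs_sub_le_abs_sub_add_abs_sub_add_abs_sub _ _
      (∫ x, f1 x ∂(νi y false)) (∫ x, f1 x ∂(νi y true))).trans ?_
    rw [Fintype.sum_bool, mul_add]
    linarith [hdist y false, hdist y true]
  calc _ ≤ ∑ y : Bool, (|∫ x, f1 x ∂(νi y false) - ∫ x, f1 x ∂(νi y true)|
          + √2 * ∑ a : Bool, jsDist (νj y a) (νi y a)) :=
        Finset.sum_le_sum fun y _ => hgap y
    _ = _ := by rw [Finset.sum_add_distrib, Finset.mul_sum]
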